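/- Let ẽ = e − E s_K + A s_K^c, where s_K is the best K-term approximation of s ≠ 0 and s_K^c = s − s_K. With ε_y = ‖e‖₂/‖A s‖₂, ε_A^{(K)} = ‖E‖₂^{(K)}/‖A‖₂^{(K)}, r_K = ‖s_K^c‖₂/‖s‖₂, s_K' = ‖s_K^c‖₁/(√K‖s‖₂), and assuming A satisfies RIP of order K, then ‖ẽ‖₂ ≤ ‖A‖₂^{(K)} ‖s‖₂ · (ε_y + ε_A^{(K)} + (1+ε_y)(r_K + s_K')). -/

import Mathlib

open Matrix Finset

/-- The ℓ₂ norm of a finite real vector. -/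
noncomputable def l2 {n : ℕ} (v : Fin n → ℝ) : ℝ := Real.sqrt (∑ i, (v i) ^ 2)

/-- The ℓ₁ norm of a finite real vector. -/
noncomputable def l1 {n : ℕ} (v : Fin n → ℝ) : ℝ := ∑ i, |v i|

/-- A vector is `K`-sparse if it has at most `K` nonzero entries. -/
def IsSparse {n : ℕ} (K : ℕ) (v : Fin n → ℝ) : Prop :=
  ∃ S : Finset (Fin n), S.card ≤ K ∧ ∀ i ∉ S, v i = 0

/-- `A` satisfies the RIP of order `K` with constant `δ`. -/
def SatisfiesRIP {m n : ℕ} (A : Matrix (Fin m) (Fin n) ℝ) (K : ℕ) (δ : ℝ) : Prop :=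
  ∀ v : Fin n → ℝ, IsSparse K v →
    (1 - δ) * (l2 v) ^ 2 ≤ (l2 (A.mulVec v)) ^ 2 ∧
      (l2 (A.mulVec v)) ^ 2 ≤ (1 + δ) * (l2 v) ^ 2

/-- Spectral norm (ℓ₂ operator norm) of a matrix. -/
noncomputable def specNorm {m n : ℕ} (A : Matrix (Fin m) (Fin n) ℝ) : ℝ :=
  sSup {c | ∃ v : Fin n → ℝ, l2 v ≤ 1 ∧ c = l2 (A.mulVec v)}

/-- The matrix with the columns of `A` indexed by `S` kept and all other columns zeroed,
representing the column-submatrix `A_S`. -/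
def colRestrict {m n : ℕ} (A : Matrix (Fin m) (Fin n) ℝ) (S : Finset (Fin n)) :
    Matrix (Fin m) (Fin n) ℝ := fun i j => if j ∈ S then A i j else 0

/-- `‖A‖₂^{(K)}`: the largest spectral norm over all `K`-column submatrices of `A`. -/
noncomputable def subNorm {m n : ℕ} (A : Matrix (Fin m) (Fin n) ℝ) (K : ℕ) : ℝ :=
  sSup {c | ∃ S : Finset (Fin n), S.card = K ∧ c = specNorm (colRestrict A S)}

/-- The pseudo-inverse `(BᵀB)⁻¹Bᵀ` of a full-column-rank matrix `B`. -/
noncomputable def pinv {m k : ℕ} (B : Matrix (Fin m) (Fin k) ℝ) : Matrix (Fin k) (Fin m) ℝ :=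
  (Bᵀ * B)⁻¹ * Bᵀ

/-- `sK` is a best `K`-term (ℓ₂) approximation of `s`. -/
def IsBestApprox {n : ℕ} (K : ℕ) (s sK : Fin n → ℝ) : Prop :=
  IsSparse K sK ∧ ∀ t : Fin n → ℝ, IsSparse K t → l2 (s - sK) ≤ l2 (s - t)

/-- Embed a vector indexed by `Fin k` into `Fin n` along an injection `f` (zero elsewhere). -/
noncomputable def embedVec {k n : ℕ} (f : Fin k → Fin n) (w : Fin k → ℝ) : Fin n → ℝ :=
  fun j => ∑ i, if f i = j then w i else 0

/-! Split `ẽ` by the triangle inequality into `e`, `E s_K` and `A (s - s_K)`. A best `K`-term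
approximation agrees with `s` on its support, so `s_K` is `K`-sparse with `‖s_K‖₂ ≤ ‖s‖₂`; this bounds
`E s_K`, and `e` through `‖A s‖₂ ≤ ‖A s_K‖₂ + ‖A (s - s_K)‖₂`. For the rest, use the block bound
`‖A w‖₂ ≤ ‖A‖₂^{(K)} (‖w‖₂ + ‖w‖₁ / √K)`: peel off the `K` largest entries of `w`. The remainder is
entrywise at most their mean, so each of its `K`-blocks has `ℓ₂` norm at most the `ℓ₁` mass of the
peeled block over `√K`, and these masses add up to `‖w‖₁`. -/

open scoped Matrix.Norms.L2Operator

section Norms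

variable {n : ℕ}

lemma l2_eq_norm (v : Fin n → ℝ) : l2 v = ‖WithLp.toLp 2 v‖ := by
  simp [l2, EuclideanSpace.norm_eq]

lemma l2_nonneg (v : Fin n → ℝ) : 0 ≤ l2 v := Real.sqrt_nonneg _

lemma l2_pos {v : Fin n → ℝ} (hv : v ≠ 0) : 0 < l2 v := by
  rw [l2_eq_norm, norm_pos_iff]
  simpa using hv

lemma l2_add_le (u v : Fin n → ℝ) : l2 (u + v) ≤ l2 u + l2 v := by
  simpa only [l2_eq_norm, WithLp.toLp_add] using norm_add_le (WithLp.toLp 2 u) (WithLp.toLp 2 v)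

lemma l2_sub_le (u v : Fin n → ℝ) : l2 (u - v) ≤ l2 u + l2 v := by
  simpa only [l2_eq_norm, WithLp.toLp_sub] using norm_sub_le (WithLp.toLp 2 u) (WithLp.toLp 2 v)

lemma l2_indicator_le (S : Set (Fin n)) (w : Fin n → ℝ) : l2 (S.indicator w) ≤ l2 w :=
  Real.sqrt_le_sqrt <| sum_le_sum fun i _ => by
    by_cases hi : i ∈ S <;> simp [hi, sq_nonneg]

lemma l2_le_sqrt_card_mul {S : Finset (Fin n)} {w : Fin n → ℝ} (hS : ∀ i ∉ S, w i = 0)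
    {c : ℝ} (hc₀ : 0 ≤ c) (hc : ∀ i, |w i| ≤ c) : l2 w ≤ √(#S : ℝ) * c := by
  rw [← Real.sqrt_sq hc₀, ← Real.sqrt_mul (Nat.cast_nonneg _)]
  refine Real.sqrt_le_sqrt ?_
  calc ∑ i, w i ^ 2 = ∑ i ∈ S, w i ^ 2 :=
        (sum_subset (subset_univ S) fun i _ hi => by simp [hS i hi]).symm
    _ ≤ ∑ _i ∈ S, c ^ 2 := sum_le_sum fun i _ => by
        simpa only [sq_abs] using pow_le_pow_left₀ (abs_nonneg _) (hc i) 2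
    _ = #S * c ^ 2 := by rw [sum_const, nsmul_eq_mul]

lemma l1_nonneg (v : Fin n → ℝ) : 0 ≤ l1 v := sum_nonneg fun _ _ => abs_nonneg _

lemma l1_indicator (S : Finset (Fin n)) (w : Fin n → ℝ) :
    l1 ((S : Set (Fin n)).indicator w) = ∑ i ∈ S, |w i| := by
  simp only [l1, Set.indicator_apply, mem_coe, apply_ite, abs_zero]
  rw [sum_ite_mem, univ_inter]

lemma l1_indicator_add_compl (S : Set (Fin n)) (w : Fin n → ℝ) :
    l1 (S.indicator w) + l1 (Sᶜ.indicator w) = l1 w := by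
  rw [l1, l1, l1, ← sum_add_distrib]
  refine sum_congr rfl fun i _ => ?_
  by_cases hi : i ∈ S <;> simp [hi]

end Norms

section SubmatrixNorms

variable {m n : ℕ}

lemma specNorm_eq_l2_opNorm (M : Matrix (Fin m) (Fin n) ℝ) : specNorm M = ‖M‖ := by
  rw [Matrix.l2_opNorm_def, ← ContinuousLinearMap.sSup_unitClosedBall_eq_norm, specNorm]
  congr 1
  ext c
  constructor
  · rintro ⟨v, hv, rfl⟩
    refine ⟨WithLp.toLp 2 v, by simpa [l2_eq_norm] using hv, ?_⟩
    simp [l2_eq_norm, Matrix.toEuclideanLin]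
  · rintro ⟨x, hx, rfl⟩
    refine ⟨x.ofLp, by simpa [l2_eq_norm] using hx, ?_⟩
    simp [l2_eq_norm, Matrix.toEuclideanLin]
    rfl

lemma l2_mulVec_le_specNorm (M : Matrix (Fin m) (Fin n) ℝ) (v : Fin n → ℝ) :
    l2 (M *ᵥ v) ≤ specNorm M * l2 v := by
  simpa [specNorm_eq_l2_opNorm, l2_eq_norm] using M.l2_opNorm_mulVec (WithLp.toLp 2 v)

lemma specNorm_nonneg (M : Matrix (Fin m) (Fin n) ℝ) : 0 ≤ specNorm M := by
  rw [specNorm_eq_l2_opNorm]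
  exact norm_nonneg M

lemma le_subNorm (M : Matrix (Fin m) (Fin n) ℝ) {K : ℕ} {S : Finset (Fin n)} (hS : #S = K) :
    specNorm (colRestrict M S) ≤ subNorm M K := by
  refine le_csSup ?_ ⟨S, hS, rfl⟩
  refine ((Set.finite_univ (α := Finset (Fin n))).image
    fun S => specNorm (colRestrict M S)).bddAbove.mono ?_
  rintro c ⟨S, -, rfl⟩
  exact ⟨S, trivial, rfl⟩

lemma subNorm_nonneg (M : Matrix (Fin m) (Fin n) ℝ) {K : ℕ} (hKn : K ≤ n) : 0 ≤ subNorm M K := by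
  obtain ⟨S, -, hS⟩ := exists_subset_card_eq (s := (univ : Finset (Fin n))) (by simpa using hKn)
  exact (specNorm_nonneg _).trans (le_subNorm M hS)

lemma colRestrict_mulVec (M : Matrix (Fin m) (Fin n) ℝ) {S : Finset (Fin n)} {v : Fin n → ℝ}
    (hv : ∀ j ∉ S, v j = 0) : colRestrict M S *ᵥ v = M *ᵥ v := by
  funext i
  simp only [mulVec, dotProduct]
  refine sum_congr rfl fun j _ => ?_
  by_cases hj : j ∈ S <;> simp [colRestrict, hj, hv]

lemma l2_mulVec_le_subNorm_of_isSparse (M : Matrix (Fin m) (Fin n) ℝ) {K : ℕ} (hKn : K ≤ n)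
    {v : Fin n → ℝ} (hv : IsSparse K v) : l2 (M *ᵥ v) ≤ subNorm M K * l2 v := by
  obtain ⟨S, hSK, hS⟩ := hv
  obtain ⟨T, hST, hT⟩ := exists_superset_card_eq hSK (by simpa using hKn)
  calc l2 (M *ᵥ v) = l2 (colRestrict M T *ᵥ v) := by
        rw [colRestrict_mulVec M fun j hj => hS j fun hjS => hj (hST hjS)]
    _ ≤ specNorm (colRestrict M T) * l2 v := l2_mulVec_le_specNorm _ _
    _ ≤ subNorm M K * l2 v := by gcongr; exacts [l2_nonneg v, le_subNorm M hT]

end SubmatrixNorms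

lemma Finset.exists_subset_card_eq_forall_le {α β : Type*} [AddCommMonoid β] [LinearOrder β]
    [IsOrderedCancelAddMonoid β] (f : α → β) {U : Finset α} {K : ℕ} (hK : K ≤ #U) :
    ∃ S ⊆ U, #S = K ∧ ∀ i ∈ U, i ∉ S → ∀ j ∈ S, f i ≤ f j := by
  classical
  obtain ⟨S, hS, hmax⟩ :=
    (powersetCard K U).exists_max_image (fun S => ∑ j ∈ S, f j) (powersetCard_nonempty.mpr hK)
  rw [mem_powersetCard] at hS
  refine ⟨S, hS.1, hS.2, fun i hiU hiS j hjS => ?_⟩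
  have hi : i ∉ S.erase j := fun h => hiS (mem_of_mem_erase h)
  have hswap : insert i (S.erase j) ∈ powersetCard K U := by
    rw [mem_powersetCard, card_insert_of_notMem hi, card_erase_of_mem hjS]
    exact ⟨insert_subset hiU ((erase_subset j S).trans hS.1),
      by have := card_pos.mpr ⟨j, hjS⟩; omega⟩
  have := hmax _ hswap
  rw [sum_insert hi, ← add_sum_erase S f hjS] at this
  exact le_of_add_le_add_right this

section BlockDecomposition

variable {m n K : ℕ} (A : Matrix (Fin m) (Fin n) ℝ)

lemma l2_mulVec_le_of_l2_indicator_le (hK : 0 < K) (hKn : K ≤ n) {B : ℝ} (w : Fin n → ℝ)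
    (hB : ∀ T : Finset (Fin n), #T ≤ K → l2 ((T : Set (Fin n)).indicator w) ≤ B) :
    l2 (A *ᵥ w) ≤ subNorm A K * (B + l1 w / √(K : ℝ)) := by
  induction hN : #{i | w i ≠ 0} using Nat.strong_induction_on generalizing w B with
  | _ N ih =>
  set U : Finset (Fin n) := {i | w i ≠ 0}
  have hσ : 0 ≤ subNorm A K := subNorm_nonneg A hKn
  have hsqrtK : 0 < √(K : ℝ) := by positivity
  by_cases hUK : #U ≤ K
  · have hwU : (U : Set (Fin n)).indicator w = w :=
      Set.indicator_eq_self.mpr fun i hi => by simpa [U] using hi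
    calc l2 (A *ᵥ w) ≤ subNorm A K * l2 w :=
          l2_mulVec_le_subNorm_of_isSparse A hKn ⟨U, hUK, fun i hi => by simpa [U] using hi⟩
      _ ≤ subNorm A K * B := by gcongr; exact hwU ▸ hB U hUK
      _ ≤ subNorm A K * (B + l1 w / √(K : ℝ)) := by
          gcongr
          exact le_add_of_nonneg_right (div_nonneg (l1_nonneg w) hsqrtK.le)
  obtain ⟨S, hSU, hSK, htop⟩ := exists_subset_card_eq_forall_le (fun i => |w i|) (not_le.mp hUK).le
  set head := (S : Set (Fin n)).indicator w
  set tail := (S : Set (Fin n))ᶜ.indicator w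
  set c := l1 head / K
  have hc₀ : 0 ≤ c := div_nonneg (l1_nonneg head) (Nat.cast_nonneg K)
  have htail_le : ∀ i, |tail i| ≤ c := by
    intro i
    by_cases hi : i ∈ S ∨ w i = 0
    · rcases hi with hi | hi <;> simp [tail, Set.indicator_apply, hi, hc₀]
    push Not at hi
    have hK_mul : (K : ℝ) * |w i| ≤ l1 head := by
      rw [l1_indicator, ← hSK, ← nsmul_eq_mul, ← sum_const]
      exact sum_le_sum (htop i (by simp [U, hi.2]) hi.1)
    simpa [tail, hi.1, c, le_div_iff₀ (by positivity : (0 : ℝ) < K), mul_comm] using hK_mul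
  have hhead : l2 (A *ᵥ head) ≤ subNorm A K * B :=
    (l2_mulVec_le_subNorm_of_isSparse A hKn ⟨S, hSK.le, fun i hi => by simp [head, hi]⟩).trans
      (by gcongr; exact hB S hSK.le)
  have htail : l2 (A *ᵥ tail) ≤ subNorm A K * (√(K : ℝ) * c + l1 tail / √(K : ℝ)) := by
    refine ih _ ?_ tail (fun T hT => ?_) rfl
    · have hsupp : ({i | tail i ≠ 0} : Finset (Fin n)) = U \ S := by
        ext i; by_cases hi : i ∈ S <;> simp [tail, U, hi]
      rw [← hN, hsupp]
      exact card_lt_card (sdiff_ssubset hSU (card_pos.mp (hSK ▸ hK)))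
    · calc l2 ((T : Set (Fin n)).indicator tail) ≤ √(#T : ℝ) * c :=
            l2_le_sqrt_card_mul (fun i hi => by simp [hi]) hc₀
              fun i => by by_cases hi : i ∈ T <;> simp [hi, htail_le i, hc₀]
        _ ≤ √(K : ℝ) * c := by gcongr
  have hsqrt_mul : √(K : ℝ) * c = l1 head / √(K : ℝ) := by
    simp only [c]
    field_simp
    rw [Real.sq_sqrt (Nat.cast_nonneg K), mul_comm]
  calc l2 (A *ᵥ w) = l2 (A *ᵥ head + A *ᵥ tail) := by
        rw [← mulVec_add, Set.indicator_self_add_compl]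
    _ ≤ l2 (A *ᵥ head) + l2 (A *ᵥ tail) := l2_add_le _ _
    _ ≤ subNorm A K * B + subNorm A K * (l1 head / √(K : ℝ) + l1 tail / √(K : ℝ)) := by
        rw [← hsqrt_mul]; exact add_le_add hhead htail
    _ = subNorm A K * (B + l1 w / √(K : ℝ)) := by
        rw [← l1_indicator_add_compl (S : Set (Fin n)) w]; ring

lemma l2_mulVec_le_subNorm_mul_l2_add_l1 (hK : 0 < K) (hKn : K ≤ n) (w : Fin n → ℝ) :
    l2 (A *ᵥ w) ≤ subNorm A K * (l2 w + l1 w / √(K : ℝ)) :=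
  l2_mulVec_le_of_l2_indicator_le A hK hKn w fun _ _ => l2_indicator_le _ w

end BlockDecomposition

lemma IsBestApprox.exists_eq_indicator {n K : ℕ} {s sK : Fin n → ℝ} (h : IsBestApprox K s sK) :
    ∃ S : Finset (Fin n), sK = (S : Set (Fin n)).indicator s := by
  obtain ⟨⟨S, hSK, hS⟩, hmin⟩ := h
  refine ⟨S, ?_⟩
  set t := (S : Set (Fin n)).indicator s
  have hpt : ∀ i, (s i - t i) ^ 2 ≤ (s i - sK i) ^ 2 := fun i => by
    by_cases hi : i ∈ S <;> simp [t, hi, hS, sq_nonneg]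
  have hsum : ∑ i, (s i - sK i) ^ 2 ≤ ∑ i, (s i - t i) ^ 2 := by
    simpa [l2, Real.sqrt_le_sqrt_iff (sum_nonneg fun i _ => sq_nonneg (s i - t i))]
      using hmin t ⟨S, hSK, fun i hi => by simp [t, hi]⟩
  have heq := (sum_eq_sum_iff_of_le fun i _ => hpt i).mp
    (le_antisymm (sum_le_sum fun i _ => hpt i) hsum)
  funext i
  by_cases hi : i ∈ S
  · have h0 : (s i - sK i) ^ 2 = 0 := by simpa [t, hi] using (heq i (mem_univ i)).symm
    simpa [t, hi, sub_eq_zero, eq_comm] using h0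
  · simp [t, hi, hS i hi]

lemma IsBestApprox.l2_le {n K : ℕ} {s sK : Fin n → ℝ} (h : IsBestApprox K s sK) :
    l2 sK ≤ l2 s := by
  obtain ⟨S, rfl⟩ := h.exists_eq_indicator
  exact l2_indicator_le _ s

theorem stmt13_general {m n : ℕ} (A E : Matrix (Fin m) (Fin n) ℝ) (K : ℕ) (hK : 0 < K) (hKn : K ≤ n)
    (s : Fin n → ℝ) (hs : s ≠ 0) (sK : Fin n → ℝ)
    (hbest : IsBestApprox K s sK) (e : Fin m → ℝ) (εy : ℝ) (hεy : 0 ≤ εy)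
    (he : l2 e = εy * l2 (A.mulVec s)) (hA : 0 < subNorm A K) :
    l2 (e - E.mulVec sK + A.mulVec (s - sK)) ≤
      subNorm A K * l2 s *
        (εy + subNorm E K / subNorm A K +
          (1 + εy) * (l2 (s - sK) / l2 s + l1 (s - sK) / (Real.sqrt K * l2 s))) := by
  have hs₀ : 0 < l2 s := l2_pos hs
  set tailBound := subNorm A K * (l2 (s - sK) + l1 (s - sK) / √(K : ℝ))
  have hAtail : l2 (A *ᵥ (s - sK)) ≤ tailBound := l2_mulVec_le_subNorm_mul_l2_add_l1 A hK hKn _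
  have hsparse (M : Matrix (Fin m) (Fin n) ℝ) : l2 (M *ᵥ sK) ≤ subNorm M K * l2 s :=
    (l2_mulVec_le_subNorm_of_isSparse M hKn hbest.1).trans <| by
      gcongr
      exacts [subNorm_nonneg M hKn, hbest.l2_le]
  have hAs : l2 (A *ᵥ s) ≤ subNorm A K * l2 s + tailBound :=
    calc l2 (A *ᵥ s) = l2 (A *ᵥ sK + A *ᵥ (s - sK)) := by rw [← mulVec_add, add_sub_cancel]
      _ ≤ subNorm A K * l2 s + tailBound := (l2_add_le _ _).trans (add_le_add (hsparse A) hAtail)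
  calc l2 (e - E *ᵥ sK + A *ᵥ (s - sK))
      ≤ l2 e + l2 (E *ᵥ sK) + l2 (A *ᵥ (s - sK)) := by
        linarith [l2_add_le (e - E *ᵥ sK) (A *ᵥ (s - sK)), l2_sub_le e (E *ᵥ sK)]
    _ ≤ εy * (subNorm A K * l2 s + tailBound) + subNorm E K * l2 s + tailBound := by
        rw [he]; gcongr; exact hsparse E
    _ = _ := by
        simp only [tailBound]
        field_simp
        ring

/-- Bound on the total error term `ẽ = e - E s_K + A s_K^c`:
`‖ẽ‖₂ ≤ ‖A‖₂^{(K)}‖s‖₂·(ε_y + ε_A^{(K)} + (1+ε_y)(r_K + s_K'))`. -/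
theorem stmt13 {m n : ℕ} (A E : Matrix (Fin m) (Fin n) ℝ) (K : ℕ) (hK : 0 < K) (hKn : K ≤ n)
    (δ : ℝ) (h : SatisfiesRIP A K δ) (s : Fin n → ℝ) (hs : s ≠ 0) (sK : Fin n → ℝ)
    (hbest : IsBestApprox K s sK) (e : Fin m → ℝ) (εy : ℝ) (hεy : 0 ≤ εy)
    (he : l2 e = εy * l2 (A.mulVec s)) (hA : 0 < subNorm A K) :
    l2 (e - E.mulVec sK + A.mulVec (s - sK)) ≤
      subNorm A K * l2 s *
        (εy + subNorm E K / subNorm A K +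
          (1 + εy) * (l2 (s - sK) / l2 s + l1 (s - sK) / (Real.sqrt K * l2 s))) :=
  stmt13_general A E K hK hKn s hs sK hbest e εy hεy he hA
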